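/- Let Σ be a finite alphabet, k, l ≥ 1, q_k a strictly positive probability density on Σ^k, and 𝓗 the space of functions f : Σ^k → ℝ^{Σ^l} with inner product ⟨f,g⟩_𝓗 = Σ_x q_k(x) ⟨f(x), g(x)⟩. Let (W, P) be a probability space (the Gibbs posterior), (Φ_j)_{j∈J} a finite family of observables W → ℝ, (e_α)_{α∈Λ} a finite family of modes in 𝓗, and (q^d)_{d∈D} a finite family of concept shifts of a base density q (each with the same marginal q_k) such that each is mode aligned: 𝒞_d − 𝒞 = Σ_{α∈Λ} c^{d,α} e_α for real coefficients c^{d,α}, where 𝒞(x) = Σ_y q(y|x)e_y and 𝒞_d(x) = Σ_y q^d(y|x)e_y. Assume all Φ_j, Φ_α(w) := ⟨Φ(w), e_α⟩_𝓗, and products Φ_j·Φ_α are integrable against P, where Φ(w)(x) = Σ_y (−log p(y|x,w)) e_y with p(y|x,w) > 0. Then the |D| × |J| response matrix X with entries X_{d,j} = −Cov_P[Φ_j, ΔL_d], where ΔL_d(w) = Σ_{x,y}(q^d(x,y) − q(x,y))(−log p(y|x,w)), factors as X = C · P_mat, where C is the |D| × |Λ| matrix with C_{d,α} = c^{d,α}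 and P_mat is the |Λ| × |J| matrix with (P_mat)_{α,j} = −Cov_P[Φ_j, Φ_α]. -/
import Mathlib


open MeasureTheory Finset

/-- **factorization of the response matrix, `X = C·P`.**
For a finite family of observables `Φ_j`, a finite family of modes `e_α`, and a finite
family of mode-aligned concept shifts `q^d` of the base density `q`, the response
matrix `X_{d,j} = −Cov_P[Φ_j, ΔL_d]` factors as `X = C · P_mat`, where
`C_{d,α} = c^{d,α}` and `(P_mat)_{α,j} = −Cov_P[Φ_j, Φ_α]` are the pure
susceptibilities. -/
theorem response_matrix_factorization
    {σ : Type*} [Fintype σ]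
    (k l : ℕ) (hk : 1 ≤ k) (hl : 1 ≤ l)
    {W : Type*} [MeasurableSpace W] (P : Measure W) [IsProbabilityMeasure P]
    (q : (Fin k → σ) → (Fin l → σ) → ℝ)
    (hq0 : ∀ x y, 0 ≤ q x y)
    (hq1 : ∑ x : Fin k → σ, ∑ y : Fin l → σ, q x y = 1)
    (qk : (Fin k → σ) → ℝ)
    (hqk : ∀ x, qk x = ∑ y : Fin l → σ, q x y)
    (hqkpos : ∀ x, 0 < qk x)
    -- the positive model `p(y|x,w)`
    (p : (Fin k → σ) → (Fin l → σ) → W → ℝ)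
    (hp : ∀ x y w, 0 < p x y w)
    -- finite index families: probe shifts `D`, observables `J`, modes `Λ`
    {D J Λ : Type*} [Fintype D] [Fintype J] [Fintype Λ]
    -- the concept-shifted conditional distributions `q^d(y|x)`
    (qcd : D → (Fin k → σ) → (Fin l → σ) → ℝ)
    (hqcd0 : ∀ d x y, 0 ≤ qcd d x y)
    (hqcd1 : ∀ d x, ∑ y : Fin l → σ, qcd d x y = 1)
    -- the modes and coupling coefficients: each shift is mode aligned
    (e : Λ → (Fin k → σ) → (Fin l → σ) → ℝ) (c : D → Λ → ℝ)
    (haligned : ∀ d x y, qcd d x y - q x y / qk x = ∑ α : Λ, c d α * e α x y)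
    -- the observables and the integrability hypotheses
    (Φj : J → W → ℝ)
    (hΦj : ∀ j, Integrable (Φj j) P)
    (hΦα : ∀ α : Λ, Integrable (fun w =>
      ∑ x : Fin k → σ, qk x * ∑ y : Fin l → σ, (-Real.log (p x y w)) * e α x y) P)
    (hΦjΦα : ∀ (j : J) (α : Λ), Integrable (fun w => Φj j w *
      ∑ x : Fin k → σ, qk x * ∑ y : Fin l → σ, (-Real.log (p x y w)) * e α x y) P) :
    (Matrix.of fun (d : D) (j : J) =>
      -((∫ w, Φj j w * (∑ x : Fin k → σ, ∑ y : Fin l → σ,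
            (qcd d x y * qk x - q x y) * (-Real.log (p x y w))) ∂P)
          - (∫ w, Φj j w ∂P) * ∫ w, (∑ x : Fin k → σ, ∑ y : Fin l → σ,
            (qcd d x y * qk x - q x y) * (-Real.log (p x y w))) ∂P))
    = (Matrix.of fun (d : D) (α : Λ) => c d α)
      * (Matrix.of fun (α : Λ) (j : J) =>
        -((∫ w, Φj j w * (∑ x : Fin k → σ, qk x * ∑ y : Fin l → σ,
              (-Real.log (p x y w)) * e α x y) ∂P)
          - (∫ w, Φj j w ∂P) * ∫ w, (∑ x : Fin k → σ, qk x * ∑ y : Fin l → σ,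
              (-Real.log (p x y w)) * e α x y) ∂P)) := by
  classical
  set Φ : Λ → W → ℝ := fun α w =>
    ∑ x : Fin k → σ, qk x * ∑ y : Fin l → σ, (-Real.log (p x y w)) * e α x y with hΦdef
  have key : ∀ (d : D) (w : W),
      (∑ x : Fin k → σ, ∑ y : Fin l → σ,
        (qcd d x y * qk x - q x y) * (-Real.log (p x y w)))
      = ∑ α : Λ, c d α * Φ α w := by
    intro d w
    have hrw : ∀ x y, qcd d x y * qk x - q x y
        = ∑ α : Λ, qk x * (c d α * e α x y) := by
      intro x y
      have hne : qk x ≠ 0 := (hqkpos x).ne'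
      have h := haligned d x y
      have h2 : qk x * (qcd d x y - q x y / qk x)
          = qk x * ∑ α : Λ, c d α * e α x y := by rw [h]
      rw [mul_sub, mul_div_cancel₀ _ hne, Finset.mul_sum] at h2
      linarith [h2, mul_comm (qcd d x y) (qk x)]
    calc (∑ x : Fin k → σ, ∑ y : Fin l → σ,
            (qcd d x y * qk x - q x y) * (-Real.log (p x y w)))
        = ∑ x : Fin k → σ, ∑ y : Fin l → σ, ∑ α : Λ,
            qk x * (c d α * e α x y) * (-Real.log (p x y w)) := by
          refine Finset.sum_congr rfl fun x _ => Finset.sum_congr rfl fun y _ => ?_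
          rw [hrw, Finset.sum_mul]
      _ = ∑ α : Λ, ∑ x : Fin k → σ, ∑ y : Fin l → σ,
            qk x * (c d α * e α x y) * (-Real.log (p x y w)) := by
          exact (Finset.sum_congr rfl fun x _ => Finset.sum_comm).trans
            Finset.sum_comm
      _ = ∑ α : Λ, c d α * Φ α w := by
          refine Finset.sum_congr rfl fun α _ => ?_
          simp only [hΦdef, Finset.mul_sum]
          refine Finset.sum_congr rfl fun x _ => ?_
          exact Finset.sum_congr rfl fun y _ => by ring
  funext d j
  have hΦint : ∀ α, Integrable (Φ α) P := hΦα
  have hΦjΦint : ∀ α, Integrable (fun w => Φj j w * Φ α w) P := hΦjΦα j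
  have hI1 : (∫ w, Φj j w * (∑ x : Fin k → σ, ∑ y : Fin l → σ,
        (qcd d x y * qk x - q x y) * (-Real.log (p x y w))) ∂P)
      = ∑ α : Λ, c d α * ∫ w, Φj j w * Φ α w ∂P := by
    have : ∀ w, Φj j w * (∑ x : Fin k → σ, ∑ y : Fin l → σ,
        (qcd d x y * qk x - q x y) * (-Real.log (p x y w)))
        = ∑ α : Λ, c d α * (Φj j w * Φ α w) := by
      intro w
      rw [key d w, Finset.mul_sum]
      exact Finset.sum_congr rfl fun α _ => by ring
    simp_rw [this]
    rw [MeasureTheory.integral_finset_sum _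
      (fun α _ => (hΦjΦint α).const_mul (c d α))]
    exact Finset.sum_congr rfl fun α _ =>
      MeasureTheory.integral_const_mul _ _
  have hI2 : (∫ w, (∑ x : Fin k → σ, ∑ y : Fin l → σ,
        (qcd d x y * qk x - q x y) * (-Real.log (p x y w))) ∂P)
      = ∑ α : Λ, c d α * ∫ w, Φ α w ∂P := by
    simp_rw [key]
    rw [MeasureTheory.integral_finset_sum _
      (fun α _ => (hΦint α).const_mul (c d α))]
    exact Finset.sum_congr rfl fun α _ =>
      MeasureTheory.integral_const_mul _ _
  simp only [Matrix.mul_apply, Matrix.of_apply]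
  rw [hI1, hI2, Finset.mul_sum, ← Finset.sum_sub_distrib, ← Finset.sum_neg_distrib]
  exact Finset.sum_congr rfl fun α _ => by ring
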